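/- arXiv:2112.00548 — 3 statements merged into one kernel-verified Lean document; each statement's English description precedes it below -/
import Mathlib

section
/- Let $n\leq N$ and $q$ be positive integers, $E_0>0$, $K>0$ and $\lambda<0$. For each integer $k$ with $n\leq k\leq N$ let $\Lambda_k:[0,E_0]\to\mathbb{R}$ satisfy $|\Lambda_k(v)|\leq K v$ for all $v\in[0,E_0]$, and assume additionally $|\Lambda_n(v)-\lambda v|\leq K v^2$ for all $v\in[0,E_0]$. Then for every $\kappa\in(0,1)$ there exist $\delta>0$ and $t_1>0$ with the following property: whenever $t_0\geq t_1$ and $v:[t_0,\infty)\to[0,E_0)$ is differentiable with $v(t_0)\leq\delta$ and $v'(t)=\sum_{k=n}^{N}t^{-k/q}\Lambda_k(v(t))+\rho(t)$ for all $t\geq t_0$, where $\rho:[t_0,\infty)\to\mathbb{R}$ satisfies $|\rho(t)|\leq K\,t^{-(N+1)/q}\,v(t)$, one has $v(t)\,(\gamma_n(t))^{(1-\kappa)|\lambda|}\leq v(t_0)\,(\gamma_n(t_0))^{(1-\kappa)|\lambda|}$ for all $t\geq t_0$. -/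
/-! With `α = (1 - κ)|λ|` the weight `G = γ_n ^ α` satisfies `G' = α t^(-n/q) G`. While `v < δ`
and `t` is large, the equation gives `v' ≤ t^(-n/q) v (λ + K v + (N - n + 1) K t^(-1/q))`, and each of
the two perturbations of the rate `λ` costs at most `κ|λ|/2`, so `v' + α t^(-n/q) v ≤ 0`: the
weighted energy `v G` does not increase. As `G` increases, this keeps `v ≤ v(t₀) < δ` at the first
time `v` could reach `δ`, so the smallness never breaks down. -/

open Real Set

/-- The weight function `γ_n (t)` of the paper. -/
noncomputable def gammaFn (n q : ℕ) (t : ℝ) : ℝ :=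
  if n = q then t else Real.exp (((q:ℝ) / ((q:ℝ) - (n:ℝ))) * t ^ (1 - (n:ℝ)/(q:ℝ)))

open Filter Topology

theorem gammaFn_pos (n q : ℕ) {t : ℝ} (ht : 0 < t) : 0 < gammaFn n q t := by
  unfold gammaFn
  split
  · exact ht
  · exact exp_pos _

theorem hasDerivAt_gammaFn (n : ℕ) {q : ℕ} (hq : q ≠ 0) {t : ℝ} (ht : 0 < t) :
    HasDerivAt (gammaFn n q) (t ^ (-(n:ℝ) / q) * gammaFn n q t) t := by
  have hq' : (q : ℝ) ≠ 0 := Nat.cast_ne_zero.2 hq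
  by_cases h : n = q
  · subst h
    have hγ : gammaFn n n = id := funext fun s => if_pos rfl
    rw [hγ, neg_div, div_self hq', rpow_neg_one]
    simpa [inv_mul_cancel₀ ht.ne'] using hasDerivAt_id t
  · have hqn : (q : ℝ) - n ≠ 0 := sub_ne_zero.2 (Nat.cast_injective.ne (Ne.symm h))
    have hγ : gammaFn n q = fun s => exp ((q / (q - n)) * s ^ (1 - (n:ℝ) / q)) :=
      funext fun s => if_neg h
    rw [hγ]
    convert ((hasDerivAt_rpow_const (p := 1 - (n:ℝ) / q) (Or.inl ht.ne')).const_mul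
      ((q:ℝ) / (q - n))).exp using 1
    rw [show 1 - (n:ℝ) / q - 1 = -(n:ℝ) / q by ring]
    field_simp

theorem hasDerivAt_gammaFn_rpow (n : ℕ) {q : ℕ} (hq : q ≠ 0) (α : ℝ) {t : ℝ} (ht : 0 < t) :
    HasDerivAt (fun s => gammaFn n q s ^ α) (α * t ^ (-(n:ℝ) / q) * gammaFn n q t ^ α) t := by
  have hγ := gammaFn_pos n q ht
  convert (hasDerivAt_gammaFn n hq ht).rpow_const (p := α) (Or.inl hγ.ne') using 1
  rw [rpow_sub_one hγ.ne']
  field_simp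

theorem ContinuousOn.exists_first_le {v : ℝ → ℝ} {t0 t δ : ℝ} (hv : ContinuousOn v (Ici t0))
    (ht : t0 ≤ t) (hδ : δ ≤ v t) : ∃ T ≥ t0, δ ≤ v T ∧ ∀ s ∈ Ico t0 T, v s < δ := by
  set E := Ici t0 ∩ v ⁻¹' Ici δ
  have hE : IsClosed E := hv.preimage_isClosed_of_isClosed isClosed_Ici isClosed_Ici
  have hbdd : BddBelow E := ⟨t0, fun s hs => hs.1⟩
  obtain ⟨hT0, hTδ⟩ : sInf E ∈ E := hE.csInf_mem ⟨t, ht, hδ⟩ hbdd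
  refine ⟨sInf E, hT0, hTδ, fun s hs => ?_⟩
  by_contra! hsδ
  exact (csInf_le hbdd ⟨hs.1, hsδ⟩).not_gt hs.2

theorem mul_le_of_deriv_add_mul_nonpos_of_lt {v v' G a : ℝ → ℝ} {t0 δ : ℝ}
    (hv : ∀ t ≥ t0, HasDerivAt v (v' t) t) (hG : ∀ t ≥ t0, HasDerivAt G (a t * G t) t)
    (hGpos : ∀ t ≥ t0, 0 < G t) (ha : ∀ t ≥ t0, 0 ≤ a t)
    (hdecay : ∀ t ≥ t0, v t < δ → v' t + a t * v t ≤ 0) (hv0 : 0 ≤ v t0) (hv0δ : v t0 < δ) :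
    ∀ t ≥ t0, v t * G t ≤ v t0 * G t0 := by
  have hGmono : MonotoneOn G (Ici t0) :=
    monotoneOn_of_hasDerivWithinAt_nonneg (convex_Ici t0)
      (fun t ht => (hG t ht).continuousAt.continuousWithinAt)
      (fun t ht => (hG t (interior_subset ht)).hasDerivWithinAt)
      (fun t ht => mul_nonneg (ha t (interior_subset ht)) (hGpos t (interior_subset ht)).le)
  have hsegment : ∀ T ≥ t0, (∀ s ∈ Ico t0 T, v s < δ) → v T * G T ≤ v t0 * G t0 := by
    intro T hT hlt
    have hprod : ∀ t ≥ t0, HasDerivAt (fun s => v s * G s) ((v' t + a t * v t) * G t) t :=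
      fun t ht => ((hv t ht).mul (hG t ht)).congr_deriv (by ring)
    refine antitoneOn_of_hasDerivWithinAt_nonpos (convex_Icc t0 T)
      (fun t ht => (hprod t ht.1).continuousAt.continuousWithinAt)
      (fun t ht => (hprod t (interior_subset ht).1).hasDerivWithinAt) (fun t ht => ?_)
      ⟨le_rfl, hT⟩ ⟨hT, le_rfl⟩ hT
    rw [interior_Icc] at ht
    exact mul_nonpos_of_nonpos_of_nonneg (hdecay t ht.1.le (hlt t ⟨ht.1.le, ht.2⟩))
      (hGpos t ht.1.le).le
  have hsmall : ∀ t ≥ t0, v t < δ := by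
    by_contra! ⟨t, ht, hδt⟩
    obtain ⟨T, hT, hδT, hlt⟩ := ContinuousOn.exists_first_le
      (fun s hs => (hv s hs).continuousAt.continuousWithinAt) ht hδt
    have hGT := hGpos T hT
    have := calc v T * G T ≤ v t0 * G t0 := hsegment T hT hlt
      _ ≤ v t0 * G T := mul_le_mul_of_nonneg_left (hGmono self_mem_Ici hT hT) hv0
      _ < δ * G T := mul_lt_mul_of_pos_right hv0δ hGT
    exact this.not_ge (mul_le_mul_of_nonneg_right hδT hGT.le)
  exact fun t ht => hsegment t ht fun s hs => hsmall s hs.1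

theorem rpow_neg_div_le_rpow_neg_div {s a b : ℝ} (q : ℝ) (hs : 1 ≤ s) (hq : 0 ≤ q)
    (hab : a ≤ b) : s ^ (-b / q) ≤ s ^ (-a / q) :=
  rpow_le_rpow_of_exponent_le hs (div_le_div_of_nonneg_right (neg_le_neg hab) hq)

theorem sum_drift_add_le {n N q : ℕ} (hnN : n ≤ N) {E0 K lam : ℝ} (hK : 0 ≤ K)
    {Λ : ℕ → ℝ → ℝ} (hΛb : ∀ k ∈ Finset.Icc n N, ∀ w ∈ Icc (0:ℝ) E0, |Λ k w| ≤ K * w)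
    (hΛn : ∀ w ∈ Icc (0:ℝ) E0, |Λ n w - lam * w| ≤ K * w ^ 2)
    {s w r : ℝ} (hs : 1 ≤ s) (hw : w ∈ Icc 0 E0) (hr : |r| ≤ K * s ^ (-((N:ℝ) + 1) / q) * w) :
    (∑ k ∈ Finset.Icc n N, s ^ (-(k:ℝ) / q) * Λ k w) + r ≤
      s ^ (-(n:ℝ) / q) * w * (lam + K * w + (N - n + 1) * K * s ^ (-1 / (q:ℝ))) := by
  have hs0 : 0 < s := one_pos.trans_le hs
  have hb : s ^ (-((n:ℝ) + 1) / q) = s ^ (-(n:ℝ) / q) * s ^ (-1 / (q:ℝ)) := by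
    rw [← rpow_add hs0]
    congr 1
    ring
  set b := s ^ (-((n:ℝ) + 1) / q)
  have hlead : s ^ (-(n:ℝ) / q) * Λ n w ≤ s ^ (-(n:ℝ) / q) * (lam * w + K * w ^ 2) :=
    mul_le_mul_of_nonneg_left (by linarith [(abs_le.1 (hΛn w hw)).2]) (by positivity)
  have htail : ∑ k ∈ Finset.Ioc n N, s ^ (-(k:ℝ) / q) * Λ k w ≤ (N - n) * (b * (K * w)) := by
    have hterm : ∀ k ∈ Finset.Ioc n N, s ^ (-(k:ℝ) / q) * Λ k w ≤ b * (K * w) := by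
      intro k hk
      obtain ⟨hnk, hkN⟩ := Finset.mem_Ioc.1 hk
      have hΛk := (abs_le.1 (hΛb k (Finset.mem_Icc.2 ⟨hnk.le, hkN⟩) w hw)).2
      calc s ^ (-(k:ℝ) / q) * Λ k w ≤ s ^ (-(k:ℝ) / q) * (K * w) :=
            mul_le_mul_of_nonneg_left hΛk (by positivity)
        _ ≤ b * (K * w) := mul_le_mul_of_nonneg_right
            (rpow_neg_div_le_rpow_neg_div _ hs q.cast_nonneg (by exact_mod_cast hnk))
            (mul_nonneg hK hw.1)
    calc _ ≤ (Finset.Ioc n N).card • (b * (K * w)) := Finset.sum_le_card_nsmul _ _ _ hterm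
      _ = _ := by rw [Nat.card_Ioc, nsmul_eq_mul, Nat.cast_sub hnN]
  have hrest : r ≤ K * b * w := by
    refine (le_abs_self r).trans (hr.trans (mul_le_mul_of_nonneg_right
      (mul_le_mul_of_nonneg_left ?_ hK) hw.1))
    exact rpow_neg_div_le_rpow_neg_div _ hs q.cast_nonneg (by exact_mod_cast Nat.succ_le_succ hnN)
  rw [Finset.Icc_eq_cons_Ioc hnN, Finset.sum_cons]
  calc _ ≤ s ^ (-(n:ℝ) / q) * (lam * w + K * w ^ 2) + (N - n) * (b * (K * w)) + K * b * w := by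
        linarith
    _ = _ := by rw [hb]; ring

theorem averaged_energy_decay_general (n N q : ℕ) (hnN : n ≤ N) (hq : 0 < q)
    (E0 K lam : ℝ) (hK : 0 < K) (hlam : lam < 0)
    (Λ : ℕ → ℝ → ℝ)
    (hΛb : ∀ k ∈ Finset.Icc n N, ∀ w ∈ Icc (0:ℝ) E0, |Λ k w| ≤ K * w)
    (hΛn : ∀ w ∈ Icc (0:ℝ) E0, |Λ n w - lam * w| ≤ K * w ^ 2) :
    ∀ κ ∈ Ioo (0:ℝ) 1, ∃ δ > 0, ∃ t1 > 0, ∀ t0 ≥ t1,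
      ∀ v v' ρ : ℝ → ℝ,
        (∀ t ≥ t0, HasDerivAt v (v' t) t) →
        (∀ t ≥ t0, v t ∈ Ico (0:ℝ) E0) →
        v t0 ≤ δ →
        (∀ t ≥ t0, v' t =
          (∑ k ∈ Finset.Icc n N, t ^ (-(k:ℝ)/(q:ℝ)) * Λ k (v t)) + ρ t) →
        (∀ t ≥ t0, |ρ t| ≤ K * t ^ (-((N:ℝ) + 1)/(q:ℝ)) * v t) →
        ∀ t ≥ t0, v t * gammaFn n q t ^ ((1 - κ) * |lam|) ≤
          v t0 * gammaFn n q t0 ^ ((1 - κ) * |lam|) := by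
  rintro κ ⟨hκ0, hκ1⟩
  have hμ : 0 < κ * |lam| / 2 := by have := abs_pos.2 hlam.ne; positivity
  have hsmall_rate : Tendsto (fun s : ℝ => (N - n + 1) * K * s ^ (-1 / (q:ℝ))) atTop (𝓝 0) := by
    simpa [neg_div] using (tendsto_rpow_neg_atTop (by positivity : 0 < 1 / (q:ℝ))).const_mul
      ((N - n + 1) * K)
  obtain ⟨t1, ht1⟩ := eventually_atTop.1 (hsmall_rate.eventually (ge_mem_nhds hμ))
  refine ⟨κ * |lam| / 2 / K / 2, by positivity, max t1 1, by positivity, ?_⟩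
  intro t0 ht0 v v' ρ hv hmem hv0 hode hρ
  have ht0_pos : 0 < t0 := one_pos.trans_le ((le_max_right _ _).trans ht0)
  refine mul_le_of_deriv_add_mul_nonpos_of_lt (δ := κ * |lam| / 2 / K) hv
    (fun s hs => hasDerivAt_gammaFn_rpow n hq.ne' _ (ht0_pos.trans_le hs))
    (fun s hs => rpow_pos_of_pos (gammaFn_pos n q (ht0_pos.trans_le hs)) _)
    (fun s hs => by have := ht0_pos.trans_le hs; positivity) (fun s hs hvs => ?_)
    (hmem t0 le_rfl).1 (hv0.trans_lt (half_lt_self (by positivity)))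
  have hw := Ico_subset_Icc_self (hmem s hs)
  have hs' : t1 ≤ s ∧ 1 ≤ s := max_le_iff.1 (ht0.trans hs)
  have hKw : K * v s ≤ κ * |lam| / 2 := by rw [lt_div_iff₀ hK] at hvs; linarith
  have hbracket : lam + K * v s + (N - n + 1) * K * s ^ (-1 / (q:ℝ)) + (1 - κ) * |lam| ≤ 0 := by
    rw [abs_of_neg hlam] at *; linarith [ht1 s hs'.1]
  have hA : 0 ≤ s ^ (-(n:ℝ) / q) * v s := mul_nonneg (rpow_nonneg (ht0_pos.trans_le hs).le _) hw.1
  rw [hode s hs]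
  linarith [sum_drift_add_le hnN hK.le hΛb hΛn hs'.2 hw (hρ s hs),
    mul_nonpos_of_nonneg_of_nonpos hA hbracket]

/-- Deterministic core of Theorem 2: if the leading averaged drift satisfies
`Λ_n (v) = λ v (1 + O (v))` with `λ < 0` and `|Λ_k (v)| ≤ K v`, then for every
`κ ∈ (0,1)` solutions of `v' = ∑_{k=n}^N t^{-k/q} Λ_k (v) + ρ` with small initial data
decay with the weight `(γ_n (t))^{(1-κ)|λ|}`. -/
theorem averaged_energy_decay (n N q : ℕ) (hn : 0 < n) (hnN : n ≤ N) (hq : 0 < q)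
    (E0 K lam : ℝ) (hE0 : 0 < E0) (hK : 0 < K) (hlam : lam < 0)
    (Λ : ℕ → ℝ → ℝ)
    (hΛb : ∀ k ∈ Finset.Icc n N, ∀ w ∈ Icc (0:ℝ) E0, |Λ k w| ≤ K * w)
    (hΛn : ∀ w ∈ Icc (0:ℝ) E0, |Λ n w - lam * w| ≤ K * w ^ 2) :
    ∀ κ ∈ Ioo (0:ℝ) 1, ∃ δ > 0, ∃ t1 > 0, ∀ t0 ≥ t1,
      ∀ v v' ρ : ℝ → ℝ,
        (∀ t ≥ t0, HasDerivAt v (v' t) t) →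
        (∀ t ≥ t0, v t ∈ Ico (0:ℝ) E0) →
        v t0 ≤ δ →
        (∀ t ≥ t0, v' t =
          (∑ k ∈ Finset.Icc n N, t ^ (-(k:ℝ)/(q:ℝ)) * Λ k (v t)) + ρ t) →
        (∀ t ≥ t0, |ρ t| ≤ K * t ^ (-((N:ℝ) + 1)/(q:ℝ)) * v t) →
        ∀ t ≥ t0, v t * gammaFn n q t ^ ((1 - κ) * |lam|) ≤
          v t0 * gammaFn n q t0 ^ ((1 - κ) * |lam|) :=
  averaged_energy_decay_general n N q hnN hq E0 K lam hK hlam Λ hΛb hΛn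
end

section
/- Let $a>0$, $b>0$, $K\geq 0$, $\beta>0$, and let $m\geq 2$ be an integer; set $u_\ast=(a/b)^{1/(m-1)}$. For every $\varepsilon>0$ there exist $\delta>0$ and $t_1>0$ with the following property: if $t_0\geq t_1$ and $u:[t_0,\infty)\to(0,\infty)$ is differentiable with $|u(t_0)-u_\ast|\leq\delta$ and $u'(t)=t^{-1}\,u(t)\,\big(a-b\,u(t)^{m-1}\big)+\rho(t)$ for all $t\geq t_0$, where $|\rho(t)|\leq K\,t^{-1-\beta}$, then $|u(t)-u_\ast|\leq\varepsilon$ for all $t\geq t_0$. -/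
open Real Set

lemma barrier_upper {t0 c : ℝ} {u u' : ℝ → ℝ}
    (hderiv : ∀ t ≥ t0, HasDerivAt u (u' t) t)
    (h0 : u t0 ≤ c) (hneg : ∀ t ≥ t0, u t = c → u' t < 0) :
    ∀ t ≥ t0, u t ≤ c := by
  intro T hT
  have h := image_le_of_deriv_right_lt_deriv_boundary (f := u) (f' := u') (a := t0) (b := T)
    (B := fun _ => c) (B' := fun _ => 0)
    (fun x hx => (hderiv x hx.1).continuousAt.continuousWithinAt)
    (fun x hx => (hderiv x hx.1).hasDerivWithinAt)
    h0 (fun x => hasDerivAt_const x c)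
    (fun x hx hx' => hneg x hx.1 hx')
  exact h ⟨hT, le_refl T⟩

lemma key_up (b w e : ℝ) (hb : 0 < b) (hw : 0 < w) (he : 0 < e) (n : ℕ) :
    b * (w/2)^(n+1) * e ≤ (w+e) * (b * ((w+e)^(n+1) - w^(n+1))) := by
  have h1 : w^n ≤ (w+e)^n := pow_le_pow_left₀ hw.le (by linarith) n
  have h2 : (w/2)^n ≤ w^n := pow_le_pow_left₀ (by positivity) (by linarith) n
  have h0' : (0:ℝ) ≤ w^n := by positivity
  have hstep : (w/2)^n * (w/2) ≤ w^n * (w+e) := mul_le_mul h2 (by linarith) (by linarith) h0'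
  have hA : w^n * e ≤ (w+e)^n * (w+e) - w^n * w := by
    nlinarith [mul_le_mul_of_nonneg_right h1 (show (0:ℝ) ≤ w+e by linarith)]
  simp only [pow_succ]
  calc b * ((w/2)^n * (w/2)) * e ≤ (w+e) * (b * (w^n * e)) := by
        nlinarith [mul_le_mul_of_nonneg_left hstep (mul_nonneg hb.le he.le)]
    _ ≤ (w+e) * (b * ((w+e)^n * (w+e) - w^n * w)) :=
        mul_le_mul_of_nonneg_left (mul_le_mul_of_nonneg_left hA hb.le) (by linarith)

lemma key_low (b w e : ℝ) (hb : 0 < b) (hw : 0 < w) (he : 0 < e) (hew : e ≤ w/2) (n : ℕ) :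
    b * (w/2)^(n+1) * e ≤ (w-e) * (b * (w^(n+1) - (w-e)^(n+1))) := by
  have h1 : (w-e)^n ≤ w^n := pow_le_pow_left₀ (by linarith) (by linarith) n
  have h2 : (w/2)^n ≤ (w-e)^n := pow_le_pow_left₀ (by positivity) (by linarith) n
  have h0' : (0:ℝ) ≤ w^n := by positivity
  have hstep : (w/2)^n * (w/2) ≤ w^n * (w-e) := mul_le_mul (h2.trans h1) (by linarith) (by linarith) h0'
  have hA : w^n * e ≤ w^n * w - (w-e)^n * (w-e) := by
    nlinarith [mul_le_mul_of_nonneg_right h1 (show (0:ℝ) ≤ w-e by linarith)]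
  simp only [pow_succ]
  calc b * ((w/2)^n * (w/2)) * e ≤ (w-e) * (b * (w^n * e)) := by
        nlinarith [mul_le_mul_of_nonneg_left hstep (mul_nonneg hb.le he.le)]
    _ ≤ (w-e) * (b * (w^n * w - (w-e)^n * (w-e))) :=
        mul_le_mul_of_nonneg_left (mul_le_mul_of_nonneg_left hA hb.le) (by linarith)

set_option maxHeartbeats 400000 in
/-- Logistic-type capture (deterministic core of the third case of Theorem 4): solutions
of `u' = t⁻¹ u (a - b u^{m-1}) + ρ` with `|ρ (t)| ≤ K t^{-1-β}`, starting close enough to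
the equilibrium `u⋆ = (a/b)^{1/(m-1)}` at a late enough time, stay within `ε` of `u⋆`. -/
theorem logistic_capture (a b K β : ℝ) (m : ℕ)
    (ha : 0 < a) (hb : 0 < b) (hK : 0 ≤ K) (hβ : 0 < β) (hm : 2 ≤ m) :
    ∀ ε > 0, ∃ δ > 0, ∃ t1 > 0, ∀ t0 ≥ t1,
      ∀ u u' ρ : ℝ → ℝ,
        (∀ t ≥ t0, HasDerivAt u (u' t) t) →
        (∀ t ≥ t0, 0 < u t) →
        |u t0 - (a / b) ^ ((1:ℝ) / ((m:ℝ) - 1))| ≤ δ →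
        (∀ t ≥ t0, u' t = t⁻¹ * u t * (a - b * u t ^ (m - 1)) + ρ t) →
        (∀ t ≥ t0, |ρ t| ≤ K * t ^ (-1 - β)) →
        ∀ t ≥ t0, |u t - (a / b) ^ ((1:ℝ) / ((m:ℝ) - 1))| ≤ ε := by
  intro ε hε
  set w := (a / b) ^ ((1:ℝ) / ((m:ℝ) - 1)) with hw_def
  have hab : 0 < a / b := div_pos ha hb
  have hw : 0 < w := Real.rpow_pos_of_pos hab _
  obtain ⟨n, hmn⟩ : ∃ n, m - 1 = n + 1 := ⟨m - 2, by omega⟩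
  have hm1R : ((m:ℝ) - 1) ≠ 0 := by
    have : (2:ℝ) ≤ (m:ℝ) := by exact_mod_cast hm
    linarith
  have hcast : ((m - 1 : ℕ) : ℝ) = (m:ℝ) - 1 := by
    have h1 : (1:ℕ) ≤ m := by omega
    push_cast [h1]
    ring
  have hkey : b * w ^ (m - 1) = a := by
    have h : w ^ (m - 1) = a / b := by
      rw [hw_def, ← Real.rpow_natCast ((a/b) ^ ((1:ℝ)/((m:ℝ)-1))) (m-1), hcast,
        ← Real.rpow_mul hab.le, one_div_mul_cancel hm1R, Real.rpow_one]
    rw [h, mul_div_cancel₀ a hb.ne']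
  -- the effective epsilon
  set e := min ε (w / 2) with he_def
  have he : 0 < e := lt_min hε (by linarith)
  have heε : e ≤ ε := min_le_left _ _
  have hew : e ≤ w / 2 := min_le_right _ _
  -- the drift lower bound constant
  set c0 := b * (w/2) ^ (n+1) * e with hc0_def
  have hc0 : 0 < c0 := by positivity
  set t1 := max 1 ((2*(K+1)/c0) ^ ((1:ℝ)/β)) with ht1_def
  have ht1pos : (0:ℝ) < t1 := lt_of_lt_of_le one_pos (le_max_left _ _)
  have ht1ge1 : (1:ℝ) ≤ t1 := by rw [ht1_def]; exact le_max_left _ _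
  have ht1geX : (2*(K+1)/c0) ^ ((1:ℝ)/β) ≤ t1 := by rw [ht1_def]; exact le_max_right _ _
  clear_value t1 c0 e w
  refine ⟨e, he, t1, ht1pos, ?_⟩
  intro t0 ht0 u u' ρ hderiv _hupos hinit hODE hρ
  have ht0one : (1:ℝ) ≤ t0 := le_trans ht1ge1 ht0
  have ht0pos : 0 < t0 := lt_of_lt_of_le one_pos ht0one
  -- the perturbation bound
  have hX : 0 < 2*(K+1)/c0 := by positivity
  have hrho : ∀ t ≥ t0, K * t ^ (-1 - β) < c0 * t⁻¹ := by
    intro t ht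
    have htone : (1:ℝ) ≤ t := le_trans ht0one ht
    have htpos : 0 < t := lt_of_lt_of_le one_pos htone
    have hXle : (2*(K+1)/c0) ^ ((1:ℝ)/β) ≤ t :=
      le_trans ht1geX (le_trans ht0 ht)
    have htb : 2*(K+1)/c0 ≤ t ^ β := by
      calc 2*(K+1)/c0 = ((2*(K+1)/c0) ^ ((1:ℝ)/β)) ^ β := by
            rw [← Real.rpow_mul hX.le, one_div_mul_cancel hβ.ne', Real.rpow_one]
        _ ≤ t ^ β := Real.rpow_le_rpow (Real.rpow_nonneg hX.le _) hXle hβ.le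
    have htbpos : 0 < t ^ β := lt_of_lt_of_le hX htb
    have hKt : K * t ^ (-β) < c0 := by
      rw [Real.rpow_neg htpos.le]
      have hinv : (t ^ β)⁻¹ ≤ (2*(K+1)/c0)⁻¹ := inv_anti₀ hX htb
      have h2 : K * (t ^ β)⁻¹ ≤ K * (2*(K+1)/c0)⁻¹ := mul_le_mul_of_nonneg_left hinv hK
      have h3 : K * (2*(K+1)/c0)⁻¹ < c0 := by
        rw [inv_div, mul_div_assoc']
        rw [div_lt_iff₀ (by linarith : (0:ℝ) < 2*(K+1))]
        nlinarith [mul_nonneg hK hc0.le]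
      linarith
    have hsplit : t ^ (-1 - β) = t⁻¹ * t ^ (-β) := by
      rw [show (-1 - β) = (-1) + (-β) by ring, Real.rpow_add htpos]
      congr 1
      rw [Real.rpow_neg_one]
    rw [hsplit]
    calc K * (t⁻¹ * t ^ (-β)) = (K * t ^ (-β)) * t⁻¹ := by ring
      _ < c0 * t⁻¹ := mul_lt_mul_of_pos_right hKt (inv_pos.2 htpos)
  -- upper barrier
  have hup : ∀ t ≥ t0, u t ≤ w + e := by
    refine barrier_upper hderiv ?_ ?_
    · have := (abs_le.1 hinit).2; linarith
    · intro t ht hut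
      have htpos : 0 < t := lt_of_lt_of_le ht0pos ht
      have hρt : ρ t < c0 * t⁻¹ :=
        lt_of_le_of_lt (le_trans (le_abs_self _) (hρ t ht)) (hrho t ht)
      have hk := key_up b w e hb hw he n
      have ha' : a = b * w ^ (n+1) := by rw [← hkey, hmn]
      rw [hODE t ht, hut, hmn, ha']
      have hdrift : t⁻¹ * (w + e) * (b * w ^ (n+1) - b * (w + e) ^ (n+1)) ≤ -(t⁻¹ * c0) := by
        have := mul_le_mul_of_nonneg_left hk (inv_nonneg.2 htpos.le)
        rw [hc0_def]
        linarith [this]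
      linarith
  -- lower barrier
  have hlow : ∀ t ≥ t0, w - e ≤ u t := by
    have hderiv' : ∀ t ≥ t0, HasDerivAt (fun s => -u s) (-(u' t)) t :=
      fun t ht => (hderiv t ht).neg
    have hinit' : -u t0 ≤ -(w - e) := by
      have := (abs_le.1 hinit).1; linarith
    have hsign : ∀ t ≥ t0, -u t = -(w - e) → -(u' t) < 0 := by
      intro t ht h
      have hut : u t = w - e := by linarith
      have htpos : 0 < t := lt_of_lt_of_le ht0pos ht
      have hρt : -(c0 * t⁻¹) < ρ t := by
        have h1 := (abs_le.1 (hρ t ht)).1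
        have := hrho t ht
        linarith
      have hk := key_low b w e hb hw he hew n
      have ha' : a = b * w ^ (n+1) := by rw [← hkey, hmn]
      rw [hODE t ht, hut, hmn, ha']
      have hdrift : t⁻¹ * c0 ≤ t⁻¹ * (w - e) * (b * w ^ (n+1) - b * (w - e) ^ (n+1)) := by
        have := mul_le_mul_of_nonneg_left hk (inv_nonneg.2 htpos.le)
        rw [hc0_def]
        linarith [this]
      linarith
    have h := barrier_upper (u := fun s => -u s) (u' := fun s => -(u' s))
      hderiv' hinit' hsign
    intro t ht
    have := h t ht
    simp only [neg_le_neg_iff] at this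
    linarith
  intro t ht
  rw [abs_le]
  constructor
  · have := hlow t ht; linarith
  · have := hup t ht; linarith
end

section
/- Let $E_0>0$, $c\in(0,E_0)$, $q\geq 1$ an integer and $M\geq 0$, and let $\Lambda:[0,E_0]\to\mathbb{R}$ be continuously differentiable with $\Lambda(c)=0$ and $\Lambda'(c)<0$. For every $\varepsilon>0$ there exist $\delta>0$ and $t_1>0$ with the following property: if $t_0\geq t_1$ and $v:[t_0,\infty)\to[0,E_0]$ is differentiable with $|v(t_0)-c|\leq\delta$ and $v'(t)=t^{-1}\,\Lambda(v(t))+\rho(t)$ for all $t\geq t_0$, where $|\rho(t)|\leq M\,t^{-1-1/q}$, then $|v(t)-c|\leq\varepsilon$ for all $t\geq t_0$. -/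
open Real Set Filter Topology

/-!
Since `Λ (c) = 0` and `Λ' (c) < 0`, near `c` we have `(x - c) Λ (x) ≤ -k (x - c)²` with
`k = -Λ' (c) / 2`. Hence on the sphere `|v - c| = ε` the squared distance `(v - c)²` has derivative
at most `2 t⁻¹ (-k ε² + ε t |ρ|)`, which is negative once `M t^{-1/q} < k ε`, i.e. for all large `t`.
So the interval `[c - ε, c + ε]` is forward invariant by the comparison principle for
differential inequalities.
-/

theorem HasDerivAt.eventually_sub_mul_le_neg_mul_sq {Λ : ℝ → ℝ} {L c k : ℝ}
    (h : HasDerivAt Λ L c) (hΛc : Λ c = 0) (hk : L < -k) :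
    ∀ᶠ x in 𝓝 c, (x - c) * Λ x ≤ -k * (x - c) ^ 2 := by
  filter_upwards [(hasDerivAt_iff_isLittleO.mp h).def (by linarith : 0 < -L - k)] with x hx
  simp only [hΛc, sub_zero, smul_eq_mul, Real.norm_eq_abs] at hx
  have hrem : (x - c) * (Λ x - (x - c) * L) ≤ (-L - k) * (x - c) ^ 2 := by
    calc (x - c) * (Λ x - (x - c) * L) ≤ |x - c| * |Λ x - (x - c) * L| := by
          rw [← abs_mul]; exact le_abs_self _
      _ ≤ |x - c| * ((-L - k) * |x - c|) := by gcongr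
      _ = (-L - k) * (x - c) ^ 2 := by rw [← sq_abs (x - c)]; ring
  linarith

theorem eventually_mul_rpow_neg_one_sub_lt (M : ℝ) {a p : ℝ} (ha : 0 < a) (hp : 0 < p) :
    ∀ᶠ t in atTop, M * t ^ (-1 - p) < a * t⁻¹ := by
  have hdecay : Tendsto (fun t : ℝ => M * t ^ (-p)) atTop (𝓝 0) := by
    simpa using (tendsto_rpow_neg_atTop hp).const_mul M
  filter_upwards [hdecay.eventually (gt_mem_nhds ha), eventually_gt_atTop 0] with t hlt ht
  calc M * t ^ (-1 - p) = M * t ^ (-p) * t⁻¹ := by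
        rw [sub_eq_add_neg, rpow_add ht, rpow_neg_one]; ring
    _ < a * t⁻¹ := by gcongr

theorem abs_sub_le_of_inward_at_boundary {v v' : ℝ → ℝ} {t₀ c ε : ℝ}
    (hv : ∀ t ≥ t₀, HasDerivAt v (v' t) t) (h₀ : |v t₀ - c| ≤ ε)
    (hin : ∀ t ≥ t₀, |v t - c| = ε → (v t - c) * v' t < 0) :
    ∀ t ≥ t₀, |v t - c| ≤ ε := by
  have hε : 0 ≤ ε := (abs_nonneg _).trans h₀
  have hsq (t : ℝ) (ht : t ≥ t₀) : HasDerivAt (fun s => (v s - c) ^ 2) (2 * (v t - c) * v' t) t := by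
    simpa [mul_comm] using ((hv t ht).sub_const c).fun_pow 2
  intro t ht
  refine abs_le_of_sq_le_sq ?_ hε
  refine image_le_of_deriv_right_lt_deriv_boundary (f := fun s => (v s - c) ^ 2)
    (B := fun _ => ε ^ 2) (B' := fun _ => 0)
    (fun s hs => (hsq s hs.1).continuousAt.continuousWithinAt)
    (fun s hs => (hsq s hs.1).hasDerivWithinAt) ?_ (fun _ => hasDerivAt_const _ _) ?_ ⟨ht, le_rfl⟩
  · simpa [sq_abs] using pow_le_pow_left₀ (abs_nonneg _) h₀ 2
  · intro s hs heq
    have habs : |v s - c| = ε := by rwa [sq_eq_sq_iff_abs_eq_abs, abs_of_nonneg hε] at heq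
    linarith [hin s hs.1 habs]

theorem mul_inv_mul_add_neg_of_abs_eq {d l ρ s k ε : ℝ} (hs : 0 < s) (hd : |d| = ε)
    (hl : d * l ≤ -k * d ^ 2) (hρ : |ρ| < k * ε * s⁻¹) :
    d * (s⁻¹ * l + ρ) < 0 := by
  have hε : 0 < ε := by
    rcases (hd ▸ abs_nonneg d).eq_or_lt with rfl | h
    · rw [mul_zero, zero_mul] at hρ
      exact absurd hρ (abs_nonneg ρ).not_gt
    · exact h
  have hdρ : d * ρ < ε * (k * ε * s⁻¹) := by
    calc d * ρ ≤ |d| * |ρ| := by rw [← abs_mul]; exact le_abs_self _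
      _ < ε * (k * ε * s⁻¹) := by rw [hd]; gcongr
  have hdl : s⁻¹ * (d * l) ≤ s⁻¹ * (-k * ε ^ 2) := by
    rw [← hd, sq_abs]; gcongr
  linarith

theorem capture_near_simple_zero_general (E0 c : ℝ) (q : ℕ) (M : ℝ)
    (hc : c ∈ Ioo (0:ℝ) E0) (hq : 1 ≤ q)
    (Λ : ℝ → ℝ) (hΛ : ContDiffOn ℝ 1 Λ (Icc 0 E0))
    (hΛc : Λ c = 0) (hΛ'c : derivWithin Λ (Icc 0 E0) c < 0) :
    ∀ ε > 0, ∃ δ > 0, ∃ t1 > 0, ∀ t0 ≥ t1,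
      ∀ v v' ρ : ℝ → ℝ,
        (∀ t ≥ t0, HasDerivAt v (v' t) t) →
        (∀ t ≥ t0, v t ∈ Icc (0:ℝ) E0) →
        |v t0 - c| ≤ δ →
        (∀ t ≥ t0, v' t = t⁻¹ * Λ (v t) + ρ t) →
        (∀ t ≥ t0, |ρ t| ≤ M * t ^ (-1 - 1/(q:ℝ))) →
        ∀ t ≥ t0, |v t - c| ≤ ε := by
  intro ε hε
  set L := derivWithin Λ (Icc 0 E0) c
  have hderiv : HasDerivAt Λ L c :=
    ((hΛ.differentiableOn one_ne_zero c (Ioo_subset_Icc_self hc)).hasDerivWithinAt).hasDerivAt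
      (Icc_mem_nhds hc.1 hc.2)
  obtain ⟨r, hr, hdissip⟩ := Metric.eventually_nhds_iff.mp
    (hderiv.eventually_sub_mul_le_neg_mul_sq hΛc (k := -L / 2) (by linarith))
  set ε₀ := min ε (r / 2)
  have hε₀ : 0 < ε₀ := lt_min hε (half_pos hr)
  have hq' : (0 : ℝ) < 1 / q := one_div_pos.mpr (Nat.cast_pos.mpr hq)
  obtain ⟨t1, hsmall⟩ := eventually_atTop.mp
    (eventually_mul_rpow_neg_one_sub_lt M (a := -L / 2 * ε₀) (mul_pos (by linarith) hε₀) hq')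
  refine ⟨ε₀, hε₀, max t1 1, by positivity, fun t0 ht0 v v' ρ hv _ hv0 hv' hρ t ht => ?_⟩
  refine (abs_sub_le_of_inward_at_boundary hv hv0 (fun s hs hvs => ?_) t ht).trans (min_le_left _ _)
  have hs1 : max t1 1 ≤ s := ht0.le.trans hs
  rw [hv' s hs]
  refine mul_inv_mul_add_neg_of_abs_eq (by linarith [le_max_right t1 1]) hvs
    (hdissip (by rw [Real.dist_eq, hvs]; linarith [min_le_right ε (r / 2)])) ?_
  calc |ρ s| ≤ M * s ^ (-1 - 1 / (q : ℝ)) := hρ s hs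
    _ < -L / 2 * ε₀ * s⁻¹ := hsmall s ((le_max_left _ _).trans hs1)

/-- Deterministic core of Theorem 6: if the averaged drift `Λ` has a simple zero
`c ∈ (0, E0)` with `Λ' (c) < 0`, then solutions of `v' = t⁻¹ Λ (v) + ρ` with
`|ρ (t)| ≤ M t^{-1-1/q}`, starting close enough to `c` at a late enough time,
stay within `ε` of `c` (capture near the stable cycle). -/
theorem capture_near_simple_zero (E0 c : ℝ) (q : ℕ) (M : ℝ)
    (hE0 : 0 < E0) (hc : c ∈ Ioo (0:ℝ) E0) (hq : 1 ≤ q) (hM : 0 ≤ M)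
    (Λ : ℝ → ℝ) (hΛ : ContDiffOn ℝ 1 Λ (Icc 0 E0))
    (hΛc : Λ c = 0) (hΛ'c : derivWithin Λ (Icc 0 E0) c < 0) :
    ∀ ε > 0, ∃ δ > 0, ∃ t1 > 0, ∀ t0 ≥ t1,
      ∀ v v' ρ : ℝ → ℝ,
        (∀ t ≥ t0, HasDerivAt v (v' t) t) →
        (∀ t ≥ t0, v t ∈ Icc (0:ℝ) E0) →
        |v t0 - c| ≤ δ →
        (∀ t ≥ t0, v' t = t⁻¹ * Λ (v t) + ρ t) →
        (∀ t ≥ t0, |ρ t| ≤ M * t ^ (-1 - 1/(q:ℝ))) →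
        ∀ t ≥ t0, |v t - c| ≤ ε :=
  capture_near_simple_zero_general E0 c q M hc hq Λ hΛ hΛc hΛ'c
end
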